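/- arXiv:2406.04189 — 2 statements merged into one kernel-verified Lean document; each statement's English description precedes it below -/
import Mathlib

section
/- There exists a countably infinite simple directed acyclic graph that admits no majority 2-coloring. Precisely: there exists a directed graph given by an irreflexive edge relation E on a countable vertex set V whose transitive closure is irreflexive (i.e., the graph has no directed cycle), such that for every coloring φ : V → Bool there is some vertex v for which the cardinality of the set of out-neighbors u of v with φ(u) = φ(v) strictly exceeds the cardinality of the set of out-neighbors u of v with φ(u) ≠ φ(v). -/
/-!
Read a two-colouring relative to the colour of a sink: call a vertex *true* if it has the sink's
colour. In a majority colouring, a vertex with a single out-neighbour takes the opposite colour,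
a vertex with three out-neighbours shares its colour with at most one of them, and a vertex with
infinitely many out-neighbours sees infinitely many of the other colour. From these gadgets we
build cells `cell k i` whose truth values `P k i` must satisfy
`P k (i + 1) ↔ P k i ∧ P (k + 1) i` and `P k 0 ↔ ∃ i, ¬ P (k + 1) i`,
the second through a vertex `reader (k + 1)` pointing at the whole row `k + 1`. This Yablo-style
system has no solution: a row that is entirely true forces the next row to be entirely true,
contradicting the second rule at its first cell; and if no row is entirely true, every first cell
is true, and then by the first rule every cell is.

The graph is acyclic because every edge strictly decreases a rank in `ℚ ×ₗ ℚ`, ordered first by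
row (row `k` at `1 / (k + 1)`, the sink gadget at `0`) and then by position within the row.
-/

open Cardinal Relation Set

theorem not_transGen_self_of_lt_comp {α β : Type*} [Preorder β] {r : α → α → Prop}
    (f : α → β) (hf : ∀ a b, r a b → f b < f a) (a : α) : ¬ TransGen r a a := fun h =>
  lt_irrefl (f a) <| (transGen_eq_self (r := (· > ·))).le _ _ <|
    TransGen.lift (p := (· > ·)) f hf a a h

theorem false_of_succ_iff_and_of_zero_iff_exists_not {P : ℕ → ℕ → Prop}
    (hsucc : ∀ k i, P k (i + 1) ↔ P k i ∧ P (k + 1) i) (hzero : ∀ k, P k 0 ↔ ∃ i, ¬ P (k + 1) i) :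
    False := by
  by_cases hrow : ∃ k, ∀ i, P k i
  · obtain ⟨k, hk⟩ := hrow
    obtain ⟨i, hi⟩ := (hzero k).1 (hk 0)
    exact hi ((hsucc k i).1 (hk (i + 1))).2
  · push Not at hrow
    have hall : ∀ i k, P k i := by
      intro i
      induction i with
      | zero => exact fun k => (hzero k).2 (hrow (k + 1))
      | succ i ih => exact fun k => (hsucc k i).2 ⟨ih k, ih (k + 1)⟩
    obtain ⟨i, hi⟩ := hrow 0
    exact hi (hall i 0)

section Majority

variable {V C : Type*}

def IsMajorityAt (E : V → V → Prop) (φ : V → C) (v : V) : Prop :=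
  #{u | E v u ∧ φ u = φ v} ≤ #{u | E v u ∧ φ u ≠ φ v}

variable {E : V → V → Prop} {φ : V → C} {v : V}

theorem IsMajorityAt.apply_ne_of_adj_iff (h : IsMajorityAt E φ v) {t : V}
    (hE : ∀ u, E v u ↔ u = t) : φ v ≠ φ t := by
  intro hφ
  have hdiff : {u | E v u ∧ φ u ≠ φ v} = ∅ :=
    eq_empty_of_forall_notMem fun u ⟨hu, hne⟩ => hne (((hE u).1 hu).symm ▸ hφ.symm)
  have hsame : #{u | E v u ∧ φ u = φ v} = 0 :=
    le_zero_iff.1 (h.trans (by rw [hdiff]; exact (mk_eq_zero _).le))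
  exact (mk_eq_zero_iff.1 hsame).false ⟨t, (hE t).2 rfl, hφ.symm⟩

theorem IsMajorityAt.eq_of_adj_subset_three (h : IsMajorityAt E φ v) {x y z : V}
    (hsub : ∀ u, E v u → u = x ∨ u = y ∨ u = z) (hx : E v x) (hy : E v y)
    (hφx : φ x = φ v) (hφy : φ y = φ v) : x = y := by
  have hdiff : {u | E v u ∧ φ u ≠ φ v}.Subsingleton := by
    rintro a ⟨ha, ha'⟩ b ⟨hb, hb'⟩
    rcases hsub a ha with rfl | rfl | rfl <;> rcases hsub b hb with rfl | rfl | rfl <;> simp_all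
  exact mk_le_one_iff_set_subsingleton.1 (h.trans hdiff.cardinalMk_le_one) ⟨hx, hφx⟩ ⟨hy, hφy⟩

theorem IsMajorityAt.infinite_setOf_ne (h : IsMajorityAt E φ v) (hinf : {u | E v u}.Infinite) :
    {u | E v u ∧ φ u ≠ φ v}.Infinite := by
  intro hdiff
  have hsame : {u | E v u ∧ φ u = φ v}.Finite :=
    lt_aleph0_iff_set_finite.1 (h.trans_lt (lt_aleph0_iff_set_finite.2 hdiff))
  refine hinf ((hsame.union hdiff).subset fun u hu => ?_)
  by_cases hφ : φ u = φ v
  exacts [Or.inl ⟨hu, hφ⟩, Or.inr ⟨hu, hφ⟩]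

theorem IsMajorityAt.apply_eq_iff_of_adj_iff {φ : V → Bool} (h : IsMajorityAt E φ v)
    {x y z : V} (hE : ∀ u, E v u ↔ u = x ∨ u = y ∨ u = z) (hxy : x ≠ y) (hxz : x ≠ z)
    (hyz : y ≠ z) {c : Bool} (hz : φ z = c) : φ v = c ↔ φ x ≠ c ∧ φ y ≠ c := by
  have hsub (a b d : V) (habd : ∀ u, u = x ∨ u = y ∨ u = z → u = a ∨ u = b ∨ u = d) :
      ∀ u, E v u → u = a ∨ u = b ∨ u = d := fun u hu => habd u ((hE u).1 hu)
  have hx : E v x := (hE x).2 (Or.inl rfl)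
  have hy : E v y := (hE y).2 (Or.inr (Or.inl rfl))
  have hz' : E v z := (hE z).2 (Or.inr (Or.inr rfl))
  constructor
  · rintro rfl
    exact ⟨fun hφx => hxz (h.eq_of_adj_subset_three (hsub x z y (by aesop)) hx hz' hφx hz),
      fun hφy => hyz (h.eq_of_adj_subset_three (hsub y z x (by aesop)) hy hz' hφy hz)⟩
  · rintro ⟨hφx, hφy⟩
    by_contra hv
    exact hxy (h.eq_of_adj_subset_three (hsub x y z (fun _ => id)) hx hy
      ((Bool.eq_not_of_ne hφx).trans (Bool.eq_not_of_ne hv).symm)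
      ((Bool.eq_not_of_ne hφy).trans (Bool.eq_not_of_ne hv).symm))

end Majority

namespace MajorityCounterexample

inductive Vertex : Type
  | sink
  | sinkNeg₁
  | sinkNeg₂
  | sinkCopy
  | reader (k : ℕ)
  | readerNeg₁ (k : ℕ)
  | readerNeg₂ (k : ℕ)
  | cell (k i : ℕ)
  | cellNeg (k i : ℕ)
  deriving Countable

open Vertex

def Adj : Vertex → Vertex → Prop
  | sink, _ => False
  | sinkNeg₁, u | sinkNeg₂, u => u = sink
  | sinkCopy, u => u = sinkNeg₁ ∨ u = sinkNeg₂ ∨ u = sink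
  | reader k, u => ∃ i, cell k i = u
  | readerNeg₁ k, u | readerNeg₂ k, u => u = reader k
  | cell k 0, u => u = readerNeg₁ (k + 1) ∨ u = readerNeg₂ (k + 1) ∨ u = reader (k + 1)
  | cell k (i + 1), u => u = cellNeg k i ∨ u = cellNeg (k + 1) i ∨ u = sinkCopy
  | cellNeg k i, u => u = cell k i

theorem cell_injective (k : ℕ) : Function.Injective (cell k) := fun _ _ h => (cell.inj h).2

def level : Vertex → ℚ
  | sink | sinkNeg₁ | sinkNeg₂ | sinkCopy => 0
  | reader k | readerNeg₁ k | readerNeg₂ k | cell k _ | cellNeg k _ => ((k : ℚ) + 1)⁻¹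

def height : Vertex → ℚ
  | sink => 0
  | sinkNeg₁ | sinkNeg₂ => 1
  | sinkCopy => 2
  | reader _ => 0
  | readerNeg₁ _ | readerNeg₂ _ => 1
  | cell _ i => -(2 * (i : ℚ) + 1)⁻¹
  | cellNeg _ i => -(2 * (i : ℚ) + 2)⁻¹

def rank (v : Vertex) : ℚ ×ₗ ℚ := toLex (level v, height v)

theorem rank_lt_of_adj {v u : Vertex} (h : Adj v u) : rank u < rank v := by
  simp only [rank, Prod.Lex.toLex_lt_toLex]
  rcases v with _ | _ | _ | _ | k | k | k | ⟨k, _ | i⟩ | ⟨k, i⟩ <;> simp only [Adj] at h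
  case reader =>
    obtain ⟨j, rfl⟩ := h
    simp [level, height]
    positivity
  all_goals rcases h with rfl | rfl | rfl
  all_goals simp [level, height]
  all_goals first
    | positivity
    | exact Or.inl (by positivity)
    | exact inv_strictAnti₀ (by positivity) (by linarith)

theorem not_transGen_adj_self (v : Vertex) : ¬ TransGen Adj v v :=
  not_transGen_self_of_lt_comp rank (fun _ _ => rank_lt_of_adj) v

section Coloring

variable {φ : Vertex → Bool}

theorem apply_sinkCopy (hφ : ∀ v, IsMajorityAt Adj φ v) : φ sinkCopy = φ sink :=
  ((hφ sinkCopy).apply_eq_iff_of_adj_iff (fun _ => Iff.rfl) (by simp) (by simp) (by simp) rfl).2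
    ⟨(hφ sinkNeg₁).apply_ne_of_adj_iff fun _ => Iff.rfl,
      (hφ sinkNeg₂).apply_ne_of_adj_iff fun _ => Iff.rfl⟩

theorem apply_cell_zero (hφ : ∀ v, IsMajorityAt Adj φ v) (k : ℕ) :
    φ (cell k 0) = φ (reader (k + 1)) :=
  ((hφ (cell k 0)).apply_eq_iff_of_adj_iff (fun _ => Iff.rfl) (by simp) (by simp) (by simp)
    rfl).2
    ⟨(hφ (readerNeg₁ (k + 1))).apply_ne_of_adj_iff fun _ => Iff.rfl,
      (hφ (readerNeg₂ (k + 1))).apply_ne_of_adj_iff fun _ => Iff.rfl⟩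

theorem apply_cellNeg_ne_iff (hφ : ∀ v, IsMajorityAt Adj φ v) (k i : ℕ) {c : Bool} :
    φ (cellNeg k i) ≠ c ↔ φ (cell k i) = c := by
  rw [Bool.eq_not_of_ne ((hφ (cellNeg k i)).apply_ne_of_adj_iff fun _ => Iff.rfl)]
  exact Bool.not_not_eq

theorem apply_cell_succ_eq_iff (hφ : ∀ v, IsMajorityAt Adj φ v) (k i : ℕ) :
    φ (cell k (i + 1)) = φ sink ↔ φ (cell k i) = φ sink ∧ φ (cell (k + 1) i) = φ sink := by
  rw [(hφ (cell k (i + 1))).apply_eq_iff_of_adj_iff (fun _ => Iff.rfl) (by simp) (by simp)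
    (by simp) (apply_sinkCopy hφ), apply_cellNeg_ne_iff hφ, apply_cellNeg_ne_iff hφ]

theorem antitone_apply_cell_eq (hφ : ∀ v, IsMajorityAt Adj φ v) (k : ℕ) :
    Antitone fun i => φ (cell k i) = φ sink :=
  antitone_nat_of_succ_le fun i h => ((apply_cell_succ_eq_iff hφ k i).1 h).1

theorem apply_reader_eq_iff (hφ : ∀ v, IsMajorityAt Adj φ v) (k : ℕ) :
    φ (reader k) = φ sink ↔ ∃ i, φ (cell k i) ≠ φ sink := by
  have hne : {u | Adj (reader k) u ∧ φ u ≠ φ (reader k)}.Infinite :=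
    (hφ (reader k)).infinite_setOf_ne (infinite_range_of_injective (cell_injective k))
  constructor
  · intro hR
    by_contra! hall
    refine hne (finite_empty.subset ?_)
    rintro _ ⟨⟨i, rfl⟩, hi⟩
    exact hi ((hall i).trans hR.symm)
  · rintro ⟨i₀, hi₀⟩
    by_contra hR
    refine hne (((finite_Iio i₀).image (cell k)).subset ?_)
    rintro _ ⟨⟨i, rfl⟩, hi⟩
    refine ⟨i, mem_Iio.2 (not_le.1 fun hle => hi ?_), rfl⟩
    exact (Bool.eq_not_of_ne fun h => hi₀ (antitone_apply_cell_eq hφ k hle h)).trans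
      (Bool.eq_not_of_ne hR).symm

end Coloring

theorem not_forall_isMajorityAt (φ : Vertex → Bool) : ¬ ∀ v, IsMajorityAt Adj φ v := fun hφ =>
  false_of_succ_iff_and_of_zero_iff_exists_not (P := fun k i => φ (cell k i) = φ sink)
    (apply_cell_succ_eq_iff hφ) fun k => by
      rw [apply_cell_zero hφ]
      exact apply_reader_eq_iff hφ (k + 1)

end MajorityCounterexample

open MajorityCounterexample

/-- There exists a countably infinite simple directed acyclic graph (an irreflexive
edge relation whose transitive closure is irreflexive, i.e. no directed cycle)
that admits no majority 2-coloring: for every coloring `φ : V → Bool` there is a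
vertex `v` whose monochromatic out-neighbors strictly outnumber (as cardinals)
its bi-chromatic out-neighbors. -/
theorem exists_countable_dag_not_majority_two_colorable :
    ∃ (V : Type) (E : V → V → Prop),
      Countable V ∧ Infinite V ∧
      Irreflexive E ∧
      Irreflexive (Relation.TransGen E) ∧
      ∀ φ : V → Bool, ∃ v : V,
        Cardinal.mk {u : V | E v u ∧ φ u ≠ φ v} <
          Cardinal.mk {u : V | E v u ∧ φ u = φ v} := by
  refine ⟨Vertex, Adj, inferInstance, .of_injective _ (cell_injective 0),
    fun v h => not_transGen_adj_self v (.single h), not_transGen_adj_self, fun φ => ?_⟩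
  by_contra! h
  exact not_forall_isMajorityAt φ h
end

section
/- Every finite simple directed acyclic graph admits a majority 2-coloring. Precisely: if E is an irreflexive relation on a finite vertex set V with no directed cycle (equivalently, the transitive closure of E is irreflexive), then there exists a coloring φ : V → Bool such that for every vertex v, the number of out-neighbors u of v with φ(u) = φ(v) is at most the number of out-neighbors u of v with φ(u) ≠ φ(v). -/
/-!
Color the vertices by well-founded recursion along the out-edges, which is possible because the
graph is finite and acyclic: once all out-neighbors of `v` are colored, give `v` the color that is
rarer among them. Then at most half of the out-neighbors of `v` share its color.
-/

open Relation

theorem Finite.wellFounded_of_irreflexive_transGen {α : Type*} [Finite α] {r : α → α → Prop}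
    (h : ∀ a, ¬TransGen r a a) : WellFounded r :=
  haveI : Std.Irrefl (TransGen r) := ⟨h⟩
  (Finite.wellFounded_of_trans_of_irrefl (TransGen r)).mono fun _ _ => TransGen.single

theorem WellFounded.exists_fixedPoint_of_local {α β : Type*} [Nonempty β] {r : α → α → Prop}
    (hwf : WellFounded r) (F : (α → β) → α → β)
    (hF : ∀ f g x, (∀ y, r y x → f y = g y) → F f x = F g x) :
    ∃ f : α → β, ∀ x, f x = F f x := by
  classical
  let f : α → β := hwf.fix fun x rec =>
    F (fun y => if h : r y x then rec y h else Classical.arbitrary β) x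
  refine ⟨f, fun x => (hwf.fix_eq _ x).trans (hF _ _ x fun y hy => ?_)⟩
  simp only [dif_pos hy, f]

section MinorityColor

variable {V : Type*}

noncomputable def minorityColor (s : Set V) (ψ : V → Bool) : Bool :=
  decide (Nat.card {u | u ∈ s ∧ ψ u = true} < Nat.card {u | u ∈ s ∧ ψ u = false})

theorem minorityColor_congr {s : Set V} {ψ ψ' : V → Bool} (h : ∀ u ∈ s, ψ u = ψ' u) :
    minorityColor s ψ = minorityColor s ψ' := by
  have hsets : ∀ b, {u | u ∈ s ∧ ψ u = b} = {u | u ∈ s ∧ ψ' u = b} := fun b =>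
    Set.ext fun u => and_congr_right fun hu => by rw [h u hu]
  simp only [minorityColor, hsets]

theorem card_eq_minorityColor_le_card_ne (s : Set V) (ψ : V → Bool) :
    Nat.card {u | u ∈ s ∧ ψ u = minorityColor s ψ} ≤
      Nat.card {u | u ∈ s ∧ ψ u ≠ minorityColor s ψ} := by
  unfold minorityColor
  by_cases hlt : Nat.card {u | u ∈ s ∧ ψ u = true} < Nat.card {u | u ∈ s ∧ ψ u = false}
  · simpa only [decide_eq_true hlt, ne_eq, Bool.not_eq_true] using hlt.le
  · simpa only [decide_eq_false hlt, ne_eq, Bool.not_eq_false] using not_lt.mp hlt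

end MinorityColor

theorem finite_dag_majority_two_colorable_general
    (V : Type) [Finite V] (E : V → V → Prop)
    (hacyc : Irreflexive (Relation.TransGen E)) :
    ∃ φ : V → Bool, ∀ v : V,
      Nat.card {u : V | E v u ∧ φ u = φ v} ≤
        Nat.card {u : V | E v u ∧ φ u ≠ φ v} := by
  have hwf : WellFounded (flip E) :=
    Finite.wellFounded_of_irreflexive_transGen fun v h => hacyc v (transGen_swap.mp h)
  obtain ⟨φ, hφ⟩ := hwf.exists_fixedPoint_of_local (fun ψ v => minorityColor {u | E v u} ψ)
    fun _ _ _ h => minorityColor_congr h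
  refine ⟨φ, fun v => ?_⟩
  rw [hφ v]
  exact card_eq_minorityColor_le_card_ne {u | E v u} φ

/-- Every finite simple directed acyclic graph admits a majority 2-coloring:
if `E` is an irreflexive relation on a finite vertex set whose transitive
closure is irreflexive (no directed cycle), then there is a coloring
`φ : V → Bool` such that every vertex has at most as many monochromatic
out-neighbors as bi-chromatic ones. -/
theorem finite_dag_majority_two_colorable
    (V : Type) [Finite V] (E : V → V → Prop)
    (hirr : Irreflexive E)
    (hacyc : Irreflexive (Relation.TransGen E)) :
    ∃ φ : V → Bool, ∀ v : V,
      Nat.card {u : V | E v u ∧ φ u = φ v} ≤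
        Nat.card {u : V | E v u ∧ φ u ≠ φ v} :=
  finite_dag_majority_two_colorable_general V E hacyc
end
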